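/- Let χ be a primitive Dirichlet character modulo q, let m be a positive integer, and let c be a positive integer with q ∣ c. Then Σ_{d ∈ (ℤ/cℤ)ˣ} χ(d)·e(md/c) = τ(χ) · Σ_{a ∣ gcd(c/q, m)} a·μ(c/(aq))·χ(c/(aq))·conj(χ)(m/a), where in the left-hand sum χ(d) is evaluated at the reduction of d modulo q, and conj(χ) denotes the complex conjugate character. -/

import Mathlib

/-!
Möbius inversion of the condition `gcd(d, c) = 1` writes the sum as
`∑_{k ∣ c} μ(k) χ(k) ∑_{f mod c/k} χ(f) e(mf/(c/k))`. Only `k` coprime to `q` contribute, and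
those divide `r = c/q`, so `c/k = q s` with `s = r/k`. Writing `f = g + q h` with `g mod q`,
`h mod s`, the sum over `h` is `s` or `0` according as `s ∣ m`, and the remaining sum over `g` is
the Gauss sum twisted by `m/s`, which is `χ̄(m/s) τ(χ)` because `χ` is primitive. The
substitution `a = r/k` then gives the stated formula.
-/

open Finset Complex Real ArithmeticFunction
open scoped ArithmeticFunction.Moebius ComplexConjugate

namespace TwistedRamanujan

noncomputable def e (x : ℂ) : ℂ := exp (2 * π * I * x)

lemma e_add (x y : ℂ) : e (x + y) = e x * e y := by
  rw [e, e, e, mul_add, Complex.exp_add]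

lemma e_natCast_div (k n : ℕ) [NeZero n] : e (k / n) = ZMod.stdAddChar (k : ZMod n) := by
  rw [← Int.cast_natCast (R := ZMod n), ZMod.stdAddChar_coe, e, Int.cast_natCast, mul_div_assoc]

lemma sum_range_eq_sum_zmod {M : Type*} [AddCommMonoid M] (n : ℕ) [NeZero n] (f : ZMod n → M) :
    ∑ i ∈ range n, f i = ∑ x : ZMod n, f x := by
  cases n with
  | zero => exact absurd rfl (NeZero.ne 0)
  | succ n =>
    rw [← Fin.sum_univ_eq_sum_range (fun i => f i)]
    exact Fintype.sum_congr _ _ fun i => congrArg f (ZMod.natCast_zmod_val (n := n + 1) i)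

lemma sum_range_mul_eq_sum_sum {M : Type*} [AddCommMonoid M] (q s : ℕ) (F : ℕ → M) :
    ∑ f ∈ range (q * s), F f = ∑ h ∈ range s, ∑ g ∈ range q, F (q * h + g) := by
  induction s with
  | zero => simp
  | succ s ih => rw [Nat.mul_succ, sum_range_add, ih, sum_range_succ]

lemma sum_range_filter_dvd_eq_sum_range_div {M : Type*} [AddCommMonoid M] {k c : ℕ} (hkc : k ∣ c)
    (F : ℕ → M) :
    ∑ d ∈ range c with k ∣ d, F d = ∑ f ∈ range (c / k), F (k * f) := by
  rcases eq_or_ne k 0 with rfl | hk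
  · simp [zero_dvd_iff.mp hkc]
  refine (sum_nbij' (k * ·) (· / k) (fun f hf => ?_) (fun d hd => ?_) (fun f _ => ?_)
    (fun d hd => ?_) fun _ _ => rfl).symm
  · simp only [mem_range, mem_filter, dvd_mul_right, and_true] at hf ⊢
    exact (Nat.lt_div_iff_mul_lt' hkc f).mp hf
  · simp only [mem_range, mem_filter] at hd ⊢
    exact Nat.div_lt_div_of_lt_of_dvd hkc hd.1
  · exact Nat.mul_div_cancel_left f (Nat.pos_of_ne_zero hk)
  · exact Nat.mul_div_cancel' (mem_filter.mp hd).2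

lemma sum_divisors_moebius {R : Type*} [Ring R] (n : ℕ) :
    ∑ k ∈ n.divisors, (μ k : R) = if n = 1 then 1 else 0 := by
  have h := congrArg (· n) (coe_moebius_mul_coe_zeta (R := R))
  simpa only [coe_mul_zeta_apply, intCoe_apply, one_apply] using h

lemma sum_divisors_filter_dvd_moebius {R : Type*} [Ring R] {c : ℕ} (hc : c ≠ 0) (d : ℕ) :
    ∑ k ∈ c.divisors with k ∣ d, (μ k : R) = if d.Coprime c then 1 else 0 := by
  have hdiv : {k ∈ c.divisors | k ∣ d} = (d.gcd c).divisors := by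
    rw [← Nat.divisors_filter_dvd_of_dvd hc (Nat.gcd_dvd_right d c)]
    exact filter_congr fun k hk => (Nat.dvd_gcd_iff.trans (and_iff_left
      (Nat.dvd_of_mem_divisors hk))).symm
  rw [hdiv, sum_divisors_moebius]

lemma sum_range_coprime_eq_sum_moebius {R : Type*} [CommRing R] {c : ℕ} (hc : c ≠ 0)
    (F : ℕ → R) :
    ∑ d ∈ range c with d.Coprime c, F d =
      ∑ k ∈ c.divisors, (μ k : R) * ∑ f ∈ range (c / k), F (k * f) := by
  calc ∑ d ∈ range c with d.Coprime c, F d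
      = ∑ d ∈ range c, ∑ k ∈ c.divisors with k ∣ d, (μ k : R) * F d := by
        rw [sum_filter]
        refine sum_congr rfl fun d _ => ?_
        rw [← sum_mul, sum_divisors_filter_dvd_moebius hc, ite_mul, one_mul, zero_mul]
    _ = ∑ k ∈ c.divisors, (μ k : R) * ∑ d ∈ range c with k ∣ d, F d := by
        simp_rw [sum_filter, mul_sum, mul_ite, mul_zero]
        exact sum_comm
    _ = _ := sum_congr rfl fun k hk => by
        rw [sum_range_filter_dvd_eq_sum_range_div (Nat.dvd_of_mem_divisors hk)]

lemma sum_range_e_mul_div_eq_ite (s m : ℕ) [NeZero s] :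
    ∑ h ∈ range s, e (m * h / s) = if s ∣ m then (s : ℂ) else 0 := by
  calc ∑ h ∈ range s, e (m * h / s)
      = ∑ h ∈ range s, ZMod.stdAddChar ((h : ZMod s) * (m : ZMod s)) :=
        sum_congr rfl fun h _ => by rw [← Nat.cast_mul, e_natCast_div, Nat.cast_mul, mul_comm]
    _ = _ := by
        rw [sum_range_eq_sum_zmod s (fun x => ZMod.stdAddChar (x * (m : ZMod s))),
          AddChar.sum_mulShift _ (ZMod.isPrimitive_stdAddChar s)]
        simp [ZMod.natCast_eq_zero_iff, ZMod.card]

lemma sum_divisors_mul_eq_sum_divisors_of_coprime {M : Type*} [AddCommMonoid M] {q r : ℕ}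
    (hqr : q * r ≠ 0) (f : ℕ → M) (hf : ∀ k, ¬ k.Coprime q → f k = 0) :
    ∑ k ∈ (q * r).divisors, f k = ∑ k ∈ r.divisors, f k := by
  refine (sum_subset (Nat.divisors_subset_of_dvd hqr (dvd_mul_left r q))
    fun k hk hkr => hf k fun hkq => hkr ?_).symm
  rw [Nat.mem_divisors] at hk ⊢
  exact ⟨hkq.dvd_of_dvd_mul_left hk.1, right_ne_zero_of_mul hqr⟩

lemma sum_divisors_ite_div_dvd {M : Type*} [AddCommMonoid M] {r : ℕ} (hr : r ≠ 0) (m : ℕ)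
    (f : ℕ → ℕ → M) :
    ∑ k ∈ r.divisors, (if r / k ∣ m then f k (r / k) else 0) =
      ∑ a ∈ (r.gcd m).divisors, f (r / a) a := by
  rw [← Nat.sum_div_divisors r, ← Nat.divisors_filter_dvd_of_dvd hr (Nat.gcd_dvd_left r m),
    sum_filter]
  refine sum_congr rfl fun a ha => ?_
  have har := Nat.dvd_of_mem_divisors ha
  simp only [Nat.div_div_self har hr, Nat.dvd_gcd_iff, har, true_and]

variable {q : ℕ} {χ : DirichletCharacter ℂ q}

variable (χ) in
lemma sum_range_mul_e_eq_gaussSum [NeZero q] :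
    ∑ d ∈ range q, χ d * e (d / q) = gaussSum χ ZMod.stdAddChar := by
  simp_rw [e_natCast_div]
  exact sum_range_eq_sum_zmod q fun x => χ x * ZMod.stdAddChar x

lemma sum_range_mul_e_mul_eq_conj_mul_gaussSum [NeZero q] (hχ : χ.IsPrimitive) (k : ℕ) :
    ∑ d ∈ range q, χ d * e (k * d / q) = conj (χ k) * gaussSum χ ZMod.stdAddChar := by
  rw [← RCLike.star_def, MulChar.star_apply', ← gaussSum_mulShift_of_isPrimitive _ hχ]
  simp_rw [← Nat.cast_mul, e_natCast_div, Nat.cast_mul]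
  exact sum_range_eq_sum_zmod q fun x => χ x * (ZMod.stdAddChar.mulShift (k : ZMod q)) x

lemma sum_range_mul_e_mul_div_mul_eq_ite [NeZero q] (hχ : χ.IsPrimitive) (m : ℕ) {s : ℕ}
    (hs : s ≠ 0) :
    ∑ f ∈ range (q * s), χ f * e (m * f / (q * s)) =
      if s ∣ m then s * conj (χ (m / s : ℕ)) * gaussSum χ ZMod.stdAddChar else 0 := by
  have : NeZero s := ⟨hs⟩
  have hqC : (q : ℂ) ≠ 0 := NeZero.ne _
  have hsC : (s : ℂ) ≠ 0 := NeZero.ne _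
  calc ∑ f ∈ range (q * s), χ f * e (m * f / (q * s))
      = ∑ h ∈ range s, ∑ g ∈ range q, e (m * h / s) * (χ g * e (m * g / (q * s))) := by
        rw [sum_range_mul_eq_sum_sum]
        refine sum_congr rfl fun h _ => sum_congr rfl fun g _ => ?_
        have hχg : χ ((q * h + g : ℕ) : ZMod q) = χ g := by simp
        rw [hχg, mul_left_comm, ← e_add]
        congr 2
        push_cast
        field_simp
    _ = (∑ h ∈ range s, e (m * h / s)) * ∑ g ∈ range q, χ g * e (m * g / (q * s)) := by
        rw [sum_mul_sum]
    _ = _ := by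
        rw [sum_range_e_mul_div_eq_ite]
        split_ifs with hsm
        · obtain ⟨m', rfl⟩ := hsm
          rw [Nat.mul_div_cancel_left m' hs.bot_lt, mul_assoc,
            ← sum_range_mul_e_mul_eq_conj_mul_gaussSum hχ m']
          congr 1
          refine sum_congr rfl fun g _ => ?_
          congr 2
          push_cast
          field_simp
        · rw [zero_mul]

lemma sum_range_div_mul_e_eq_mul_sum (m : ℕ) {k r : ℕ} (hk : k ∣ r) :
    ∑ f ∈ range (q * r / k), χ (k * f) * e (m * (k * f) / (q * r)) =
      χ k * ∑ f ∈ range (q * (r / k)), χ f * e (m * f / (q * (r / k : ℕ))) := by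
  rcases eq_or_ne k 0 with rfl | hk0
  · simp [zero_dvd_iff.mp hk]
  rw [Nat.mul_div_assoc q hk, mul_sum]
  refine sum_congr rfl fun f _ => ?_
  have hkC : (k : ℂ) ≠ 0 := Nat.cast_ne_zero.mpr hk0
  rw [map_mul, Nat.cast_div hk hkC, mul_assoc]
  congr 3
  field_simp

end TwistedRamanujan

open TwistedRamanujan in
theorem stmt_7 (q : ℕ) (χ : DirichletCharacter ℂ q) (hprim : χ.IsPrimitive)
    (m c : ℕ) (hqc : q ∣ c) :
    ∑ d ∈ (Finset.range c).filter (fun d => Nat.Coprime d c),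
        χ (d : ZMod q) * Complex.exp (2 * π * I * (((m * d : ℕ) : ℂ) / (c : ℂ))) =
      (∑ d ∈ Finset.range q, χ (d : ZMod q) * Complex.exp (2 * π * I * ((d : ℂ) / (q : ℂ)))) *
        ∑ a ∈ (Nat.gcd (c / q) m).divisors,
          (a : ℂ) * ((ArithmeticFunction.moebius (c / (a * q)) : ℤ) : ℂ) *
            χ ((c / (a * q) : ℕ) : ZMod q) *
            (starRingEnd ℂ) (χ ((m / a : ℕ) : ZMod q)) := by
  rcases eq_or_ne c 0 with rfl | hc
  · simp
  obtain ⟨r, rfl⟩ := hqc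
  have hq : q ≠ 0 := left_ne_zero_of_mul hc
  have hr : r ≠ 0 := right_ne_zero_of_mul hc
  have : NeZero q := ⟨hq⟩
  have hdiv (a : ℕ) : q * r / (a * q) = r / a := by
    rw [mul_comm a, ← Nat.div_div_eq_div_mul, Nat.mul_div_cancel_left r hq.bot_lt]
  simp_rw [hdiv, Nat.mul_div_cancel_left r hq.bot_lt]
  change ∑ d ∈ range (q * r) with d.Coprime (q * r), χ d * e ((m * d : ℕ) / (q * r : ℕ)) =
    (∑ d ∈ range q, χ d * e (d / q)) * _
  rw [sum_range_mul_e_eq_gaussSum, sum_range_coprime_eq_sum_moebius hc]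
  push_cast
  rw [sum_divisors_mul_eq_sum_divisors_of_coprime hc _ fun k hk => ?vanish]
  case vanish =>
    have hχk : χ k = 0 := χ.map_nonunit (mt (ZMod.isUnit_iff_coprime k q).mp hk)
    simp [hχk]
  rw [sum_congr rfl fun k hk => by
    rw [sum_range_div_mul_e_eq_mul_sum m (Nat.dvd_of_mem_divisors hk),
      sum_range_mul_e_mul_div_mul_eq_ite hprim m
        (Nat.div_pos (Nat.divisor_le hk) (Nat.pos_of_mem_divisors hk)).ne']]
  simp_rw [mul_ite, mul_zero]
  rw [sum_divisors_ite_div_dvd hr m fun k a =>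
    (μ k : ℂ) * (χ k * (a * conj (χ (m / a : ℕ)) * gaussSum χ ZMod.stdAddChar)), mul_sum]
  exact sum_congr rfl fun a _ => by ring
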